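/- arXiv:2309.09103 — 3 statements merged into one kernel-verified Lean document; each statement's English description precedes it below -/
import Mathlib

section
/- Under the two-sample density ratio model with Conditions (ii) and (iii), the score function of the profile log empirical likelihood at the true parameter, ∂ℓ_n(θ*)/∂θ = −Σ_{k=0,1} Σ_{j=1}^{n_k} [n₁ exp(θ*ᵀ q(x_{kj})) / (n₀ + n₁ exp(θ*ᵀ q(x_{kj})))] q(x_{kj}) + Σ_{j=1}^{n₁} q(x_{1j}), has expectation zero: E[∂ℓ_n(θ*)/∂θ] = 0, where each x_{kj} is distributed according to G_k. -/
open MeasureTheory ProbabilityTheory Filter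
open scoped BigOperators

noncomputable section

/-- The score function (gradient of the dual/profile log empirical likelihood
`ℓ_n(θ) = -Σ_{k,j} log[n₀ + n₁ exp(θᵀ q(x_{kj}))] + Σ_{j} θᵀ q(x_{1j})`)
of the two-sample density ratio model, evaluated at parameter `θ`. -/
def drmScore {Ω : Type*} (d : ℕ) (q : ℝ → Fin (d + 1) → ℝ)
    (X : Fin 2 → ℕ → Ω → ℝ) (n₀ n₁ : ℕ) (θ : Fin (d + 1) → ℝ) (ω : Ω)
    (i : Fin (d + 1)) : ℝ :=
  -(∑ k : Fin 2, ∑ j ∈ Finset.range (![n₀, n₁] k),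
      (n₁ : ℝ) * Real.exp (∑ l, θ l * q (X k j ω) l)
        / ((n₀ : ℝ) + (n₁ : ℝ) * Real.exp (∑ l, θ l * q (X k j ω) l))
        * q (X k j ω) i)
    + ∑ j ∈ Finset.range n₁, q (X 1 j ω) i

/-!
Write `ρ = exp (θ*ᵀ q) = dG₁/dG₀` and `w = n₁ ρ / (n₀ + n₁ ρ)`. Each observation contributes
`-w q_i` to the score and each observation of the second sample also `q_i`, so the mean score is
`-(n₀ E₀[w q_i] + n₁ E₁[w q_i]) + n₁ E₁[q_i]`. Changing measure, `E₁[f] = E₀[ρ f]`, the bracket is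
`E₀[(n₀ + n₁ ρ) w q_i] = n₁ E₀[ρ q_i] = n₁ E₁[q_i]`. Everything is integrable because `0 ≤ w ≤ 1`
and `q_i` has exponential moments near `0` under both `G₀` and `G₁`, by Condition (iii).
-/

section Moments

variable {α ι : Type*} [MeasurableSpace α] [Fintype ι] [DecidableEq ι] {μ : Measure α}

theorem integrable_apply_of_integrable_exp_near_zero {q : α → ι → ℝ} {ε : ℝ} (hε : 0 < ε)
    (h : ∀ θ : ι → ℝ, Real.sqrt (∑ l, θ l ^ 2) < ε →
      Integrable (fun x => Real.exp (∑ l, θ l * q x l)) μ) (i : ι) :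
    Integrable (fun x => q x i) μ := by
  have hexp : ∀ s : ℝ, |s| < ε → Integrable (fun x => Real.exp (s * q x i)) μ := by
    intro s hs
    simpa [Pi.single_apply, Real.sqrt_sq_eq_abs, hs] using h (Pi.single i s)
  have ht : |ε / 2| < ε := by rw [abs_of_pos (half_pos hε)]; linarith
  simpa using integrable_pow_of_integrable_exp_mul (half_pos hε).ne' (hexp _ ht)
    (hexp _ (by rwa [abs_neg])) 1

end Moments

section Mixture

variable {α : Type*} [MeasurableSpace α] {μ : Measure α} {ρ : α → ℝ}

theorem integrable_withDensity_ofReal_iff (hρ : AEMeasurable ρ μ) (hρ0 : ∀ x, 0 ≤ ρ x)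
    {f : α → ℝ} :
    Integrable f (μ.withDensity fun x => ENNReal.ofReal (ρ x)) ↔
      Integrable (fun x => ρ x * f x) μ := by
  simp [integrable_withDensity_iff_integrable_smul₀' hρ.ennreal_ofReal
    (ae_of_all _ fun _ => ENNReal.ofReal_lt_top), ENNReal.toReal_ofReal (hρ0 _)]

theorem integral_withDensity_ofReal (hρ : AEMeasurable ρ μ) (hρ0 : ∀ x, 0 ≤ ρ x) (f : α → ℝ) :
    ∫ x, f x ∂(μ.withDensity fun x => ENNReal.ofReal (ρ x)) = ∫ x, ρ x * f x ∂μ := by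
  simp [integral_withDensity_eq_integral_toReal_smul₀ hρ.ennreal_ofReal
    (ae_of_all _ fun _ => ENNReal.ofReal_lt_top), ENNReal.toReal_ofReal (hρ0 _)]

theorem div_add_self_mem_Icc {a b : ℝ} (ha : 0 ≤ a) (hb : 0 ≤ b) : b / (a + b) ∈ Set.Icc 0 1 :=
  ⟨by positivity, div_le_one_of_le₀ (le_add_of_nonneg_left ha) (by positivity)⟩

theorem add_mul_div_add_self {a b : ℝ} (ha : 0 ≤ a) (hb : 0 ≤ b) :
    (a + b) * (b / (a + b)) = b := by
  rcases (add_nonneg ha hb).eq_or_lt with h | h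
  · rw [← h, zero_mul]; linarith
  · exact mul_div_cancel₀ b h.ne'

variable {a b : ℝ}

-- `b ρ / (a + b ρ)` is the posterior weight of the second component of the mixture `a μ + b ρ μ`.
theorem MeasureTheory.Integrable.mixture_weight_mul {ν : Measure α} (hρ : Measurable ρ)
    (hρ0 : ∀ x, 0 ≤ ρ x) (ha : 0 ≤ a) (hb : 0 ≤ b) {f : α → ℝ} (hf : Integrable f ν) :
    Integrable (fun x => b * ρ x / (a + b * ρ x) * f x) ν := by
  have hweight : Measurable fun x => b * ρ x / (a + b * ρ x) :=
    (hρ.const_mul b).div (measurable_const.add (hρ.const_mul b))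
  refine hf.bdd_mul (c := 1) hweight.aestronglyMeasurable (ae_of_all _ fun x => ?_)
  have := div_add_self_mem_Icc ha (mul_nonneg hb (hρ0 x))
  rw [Real.norm_of_nonneg this.1]
  exact this.2

theorem integral_mixture_weight_balance (hρ : Measurable ρ) (hρ0 : ∀ x, 0 ≤ ρ x) (ha : 0 ≤ a)
    (hb : 0 ≤ b) {f : α → ℝ} (hf₀ : Integrable f μ)
    (hf₁ : Integrable f (μ.withDensity fun x => ENNReal.ofReal (ρ x))) :
    a * ∫ x, b * ρ x / (a + b * ρ x) * f x ∂μ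
      + b * ∫ x, b * ρ x / (a + b * ρ x) * f x ∂(μ.withDensity fun x => ENNReal.ofReal (ρ x))
      = b * ∫ x, f x ∂(μ.withDensity fun x => ENNReal.ofReal (ρ x)) := by
  have hw₁ := (integrable_withDensity_ofReal_iff hρ.aemeasurable hρ0).1
    (hf₁.mixture_weight_mul hρ hρ0 ha hb)
  simp only [integral_withDensity_ofReal hρ.aemeasurable hρ0, ← integral_const_mul]
  rw [← integral_add ((hf₀.mixture_weight_mul hρ hρ0 ha hb).const_mul a) (hw₁.const_mul b)]
  refine integral_congr_ae (ae_of_all _ fun x => ?_)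
  calc a * (b * ρ x / (a + b * ρ x) * f x) + b * (ρ x * (b * ρ x / (a + b * ρ x) * f x))
      = (a + b * ρ x) * (b * ρ x / (a + b * ρ x)) * f x := by ring
    _ = b * (ρ x * f x) := by
      rw [add_mul_div_add_self ha (mul_nonneg hb (hρ0 x))]; ring

end Mixture

section IdenticallyDistributed

variable {Ω α : Type*} [MeasurableSpace Ω] [MeasurableSpace α] {P : Measure Ω} {μ : Measure α}
  {Y : ℕ → Ω → α} {f : α → ℝ}

theorem integrable_sum_range_comp (hY : ∀ j, AEMeasurable (Y j) P) (hlaw : ∀ j, P.map (Y j) = μ)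
    (hf : Integrable f μ) (m : ℕ) : Integrable (fun ω => ∑ j ∈ Finset.range m, f (Y j ω)) P :=
  integrable_finsetSum _ fun j _ => ((hlaw j).symm ▸ hf).comp_aemeasurable (hY j)

theorem integral_sum_range_comp (hY : ∀ j, AEMeasurable (Y j) P) (hlaw : ∀ j, P.map (Y j) = μ)
    (hf : Integrable f μ) (m : ℕ) :
    ∫ ω, ∑ j ∈ Finset.range m, f (Y j ω) ∂P = m * ∫ x, f x ∂μ := by
  have hcomp : ∀ j, ∫ ω, f (Y j ω) ∂P = ∫ x, f x ∂μ := fun j => by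
    rw [← integral_map (hY j) (hlaw j ▸ hf.aestronglyMeasurable), hlaw j]
  rw [integral_finsetSum _ fun j _ => ((hlaw j).symm ▸ hf).comp_aemeasurable (hY j)]
  simp [hcomp]

end IdenticallyDistributed

def drmScoreTerm (d : ℕ) (q : ℝ → Fin (d + 1) → ℝ) (n₀ n₁ : ℕ) (θ : Fin (d + 1) → ℝ)
    (i : Fin (d + 1)) (x : ℝ) : ℝ :=
  n₁ * Real.exp (∑ l, θ l * q x l) / (n₀ + n₁ * Real.exp (∑ l, θ l * q x l)) * q x i

theorem integral_drmScore {Ω : Type*} [MeasurableSpace Ω] {P : Measure Ω}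
    {G : Fin 2 → Measure ℝ} {X : Fin 2 → ℕ → Ω → ℝ} (hX : ∀ k j, AEMeasurable (X k j) P)
    (hlaw : ∀ k j, P.map (X k j) = G k) {d : ℕ} {q : ℝ → Fin (d + 1) → ℝ} {n₀ n₁ : ℕ}
    {θ : Fin (d + 1) → ℝ} {i : Fin (d + 1)}
    (hterm : ∀ k, Integrable (drmScoreTerm d q n₀ n₁ θ i) (G k))
    (hq : Integrable (fun x => q x i) (G 1)) :
    ∫ ω, drmScore d q X n₀ n₁ θ ω i ∂P
      = -(n₀ * ∫ x, drmScoreTerm d q n₀ n₁ θ i x ∂G 0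
          + n₁ * ∫ x, drmScoreTerm d q n₀ n₁ θ i x ∂G 1) + n₁ * ∫ x, q x i ∂G 1 := by
  have hsplit : (fun ω => drmScore d q X n₀ n₁ θ ω i) = fun ω =>
      -(∑ j ∈ Finset.range n₀, drmScoreTerm d q n₀ n₁ θ i (X 0 j ω)
        + ∑ j ∈ Finset.range n₁, drmScoreTerm d q n₀ n₁ θ i (X 1 j ω))
      + ∑ j ∈ Finset.range n₁, q (X 1 j ω) i := by
    funext ω
    simp [drmScore, drmScoreTerm, Fin.sum_univ_two]
  have h₀ := integrable_sum_range_comp (hX 0) (hlaw 0) (hterm 0) n₀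
  have h₁ := integrable_sum_range_comp (hX 1) (hlaw 1) (hterm 1) n₁
  rw [hsplit, integral_add ?neg (integrable_sum_range_comp (hX 1) (hlaw 1) hq n₁),
    integral_neg, integral_add h₀ h₁, integral_sum_range_comp (hX 0) (hlaw 0) (hterm 0),
    integral_sum_range_comp (hX 1) (hlaw 1) (hterm 1), integral_sum_range_comp (hX 1) (hlaw 1) hq]
  case neg => exact (h₀.add h₁).neg

theorem drm_score_mean_zero_general
    (d : ℕ) {Ω : Type*} [MeasurableSpace Ω] (P : Measure Ω)
    (G : Fin 2 → Measure ℝ)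
    (q : ℝ → Fin (d + 1) → ℝ) (hqmeas : Measurable q)
    (θstar : Fin (d + 1) → ℝ)
    -- the density ratio model: dG₁ = exp(θ*ᵀ q) dG₀
    (hDRM : G 1 = (G 0).withDensity fun x => ENNReal.ofReal (Real.exp (∑ i, θstar i * q x i)))
    -- independent samples, the j-th observation of sample k having law G_k
    (X : Fin 2 → ℕ → Ω → ℝ) (hXmeas : ∀ k j, Measurable (X k j))
    (hlaw : ∀ k j, Measure.map (X k j) P = G k)
    (n₀ n₁ : ℕ)
    -- Condition (iii): the moment generating functions exist near θ* and near 0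
    (hiii : ∃ ε > 0, ∀ θ : Fin (d + 1) → ℝ,
      (Real.sqrt (∑ i, (θ i - θstar i) ^ 2) < ε ∨ Real.sqrt (∑ i, (θ i) ^ 2) < ε) →
      Integrable (fun x => Real.exp (∑ i, θ i * q x i)) (G 0) ∧
      Integrable (fun x => Real.exp (∑ i, θ i * q x i)) (G 1)) :
    ∀ i : Fin (d + 1), (∫ ω, drmScore d q X n₀ n₁ θstar ω i ∂P) = 0 := by
  intro i
  obtain ⟨ε, hε, hmgf⟩ := hiii
  have hρ : Measurable fun x => Real.exp (∑ l, θstar l * q x l) := by fun_prop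
  have hρ0 : ∀ x, 0 ≤ Real.exp (∑ l, θstar l * q x l) := fun x => (Real.exp_pos _).le
  have hq : ∀ k, Integrable (fun x => q x i) (G k) := Fin.forall_fin_two.2
    ⟨integrable_apply_of_integrable_exp_near_zero hε (fun θ hθ => (hmgf θ (Or.inr hθ)).1) i,
      integrable_apply_of_integrable_exp_near_zero hε (fun θ hθ => (hmgf θ (Or.inr hθ)).2) i⟩
  have hterm : ∀ k, Integrable (drmScoreTerm d q n₀ n₁ θstar i) (G k) := fun k =>
    (hq k).mixture_weight_mul hρ hρ0 n₀.cast_nonneg n₁.cast_nonneg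
  have hbalance := integral_mixture_weight_balance hρ hρ0 n₀.cast_nonneg n₁.cast_nonneg (hq 0)
    (hDRM ▸ hq 1)
  rw [← hDRM] at hbalance
  rw [integral_drmScore (fun k j => (hXmeas k j).aemeasurable) hlaw hterm (hq 1)]
  unfold drmScoreTerm
  linarith

/-- Under the two-sample density ratio model with Conditions (ii) and (iii),
the score function of the profile log empirical likelihood at the true parameter has
expectation zero. -/
theorem drm_score_mean_zero
    (d : ℕ) {Ω : Type*} [MeasurableSpace Ω] (P : Measure Ω) [IsProbabilityMeasure P]
    (G : Fin 2 → Measure ℝ) [∀ k, IsProbabilityMeasure (G k)]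
    (q : ℝ → Fin (d + 1) → ℝ) (hqmeas : Measurable q)
    (hq0 : ∀ x, q x 0 = 1)
    (θstar : Fin (d + 1) → ℝ)
    -- the density ratio model: dG₁ = exp(θ*ᵀ q) dG₀
    (hDRM : G 1 = (G 0).withDensity fun x => ENNReal.ofReal (Real.exp (∑ i, θstar i * q x i)))
    -- independent samples, the j-th observation of sample k having law G_k
    (X : Fin 2 → ℕ → Ω → ℝ) (hXmeas : ∀ k j, Measurable (X k j))
    (hindep : iIndepFun (fun p : Fin 2 × ℕ => X p.1 p.2) P)
    (hlaw : ∀ k j, Measure.map (X k j) P = G k)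
    (n₀ n₁ : ℕ) (hn₀ : 0 < n₀) (hn₁ : 0 < n₁)
    -- Condition (ii): E₀[q(X) qᵀ(X)] is positive definite
    (hii : (Matrix.of fun i j => ∫ x, q x i * q x j ∂(G 0)).PosDef)
    -- Condition (iii): the moment generating functions exist near θ* and near 0
    (hiii : ∃ ε > 0, ∀ θ : Fin (d + 1) → ℝ,
      (Real.sqrt (∑ i, (θ i - θstar i) ^ 2) < ε ∨ Real.sqrt (∑ i, (θ i) ^ 2) < ε) →
      Integrable (fun x => Real.exp (∑ i, θ i * q x i)) (G 0) ∧
      Integrable (fun x => Real.exp (∑ i, θ i * q x i)) (G 1)) :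
    ∀ i : Fin (d + 1), (∫ ω, drmScore d q X n₀ n₁ θstar ω i ∂P) = 0 :=
  drm_score_mean_zero_general d P G q hqmeas θstar hDRM X hXmeas hlaw n₀ n₁ hiii
end
end

section
/- In the two-sample exponential family model, assume that for k = 0, 1 the maximum likelihood estimators satisfy √n_k (η̃_k − η_k*) →d N(0, Var_k^{−1}[q₋(X)]) with Var_k[q₋(X)] positive definite, and that A is differentiable at η_k* with ∇A(η_k*) = −E_k[q₋(X)]. If n₁/n₀ → 0 as n₀, n₁ → ∞, then the maximum likelihood estimator θ̃ = (A(η̃₁) − A(η̃₀), (η̃₁ − η̃₀)ᵀ)ᵀ of the DRM parameter satisfies √n₁ (θ̃ − θ*) →d N(0, J Var₁^{−1}[q₋(X)] Jᵀ), where J is the d×(d−1) matrix whose first row is −E₁[q₋(X)]ᵀ and whose remaining d−1 rows form the (d−1)×(d−1) identity matrix. -/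
open MeasureTheory ProbabilityTheory Filter
open scoped BigOperators Topology

noncomputable section

/-- The normalizing constant `A(η) = -log ∫ B(x) exp(ηᵀ q₋(x)) dx` of the exponential family. -/
def expFamA (m : ℕ) (B : ℝ → ℝ) (qm : ℝ → Fin m → ℝ) (η : Fin m → ℝ) : ℝ :=
  -Real.log (∫ x, B x * Real.exp (∑ i, η i * qm x i))

/-- The exponential family density `g(x; η) = B(x) exp(ηᵀ q₋(x) + A(η))`. -/
def expFamDensity (m : ℕ) (B : ℝ → ℝ) (qm : ℝ → Fin m → ℝ) (η : Fin m → ℝ) (x : ℝ) : ℝ :=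
  B x * Real.exp ((∑ i, η i * qm x i) + expFamA m B qm η)

/-- The exponential family distribution with natural parameter `η` (w.r.t. Lebesgue measure). -/
def expFamMeasure (m : ℕ) (B : ℝ → ℝ) (qm : ℝ → Fin m → ℝ) (η : Fin m → ℝ) : Measure ℝ :=
  MeasureTheory.volume.withDensity fun x => ENNReal.ofReal (expFamDensity m B qm η x)

/-!
Fix `u` and put `Φ η = u₀ A(η) + ∑ᵢ uᵢ₊₁ ηᵢ`, so that
`⟨u, θ̃ - θ*⟩ = (Φ η̃₁ - Φ η₁*) - (Φ η̃₀ - Φ η₀*)`. By Lévy's tightness criterion the CLT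
hypotheses make `√n_k (η̃_k - η_k*)` bounded in probability. The delta method then gives
`√n₁ (Φ η̃₁ - Φ η₁*) = √n₁ ∇Φ(η₁*) · (η̃₁ - η₁*) + o_P(1)`, and since `∇Φ(η₁*) = Jᵀu` the
linear term has the Gaussian limit with variance `uᵀ J V₁⁻¹ Jᵀ u`. The sample-0 term is
`√(n₁/n₀) · √n₀ (Φ η̃₀ - Φ η₀*) = o(1) · O_P(1) = o_P(1)`, and Slutsky's lemma for
characteristic functions discards both negligible terms.
-/

open scoped ENNReal BoundedContinuousFunction Matrix

section BoundedInProbability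

variable {Ω E F : Type*} [MeasurableSpace Ω] [NormedAddCommGroup E] {P : Measure Ω}

/-- Stochastic boundedness `W n = O_P(1)`. -/
def BoundedInProbability (P : Measure Ω) (W : ℕ → Ω → E) : Prop :=
  ∀ δ : ℝ≥0∞, 0 < δ → ∃ M : ℝ, ∀ᶠ n in atTop, P {ω | M < ‖W n ω‖} ≤ δ

lemma boundedInProbability_of_isTightMeasureSet [MeasurableSpace E] [OpensMeasurableSpace E]
    {W : ℕ → Ω → E} (hW : ∀ n, AEMeasurable (W n) P)
    (h : IsTightMeasureSet (Set.range fun n => P.map (W n))) : BoundedInProbability P W := by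
  intro δ hδ
  obtain ⟨M, hM⟩ :=
    ENNReal.tendsto_atTop_zero.1 (tendsto_measure_norm_gt_of_isTightMeasureSet h) δ hδ
  refine ⟨M, .of_forall fun n => ?_⟩
  have hmeas : MeasurableSet {x : E | M < ‖x‖} := measurableSet_lt measurable_const measurable_norm
  calc P {ω | M < ‖W n ω‖} = P.map (W n) {x | M < ‖x‖} :=
        (Measure.map_apply_of_aemeasurable (hW n) hmeas).symm
    _ ≤ ⨆ μ ∈ Set.range fun n => P.map (W n), μ {x | M < ‖x‖} :=
        le_iSup₂_of_le _ ⟨n, rfl⟩ le_rfl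
    _ ≤ δ := hM M le_rfl

variable [NormedSpace ℝ E] [NormedAddCommGroup F] [NormedSpace ℝ F]

lemma BoundedInProbability.tendstoInMeasure_smul {W : ℕ → Ω → E}
    (hW : BoundedInProbability P W) {c : ℕ → ℝ} (hc : Tendsto c atTop (𝓝 0)) :
    TendstoInMeasure P (fun n ω => c n • W n ω) atTop 0 := by
  rw [tendstoInMeasure_iff_norm]
  intro ε hε
  refine ENNReal.tendsto_nhds_zero.2 fun δ hδ => ?_
  obtain ⟨M, hM⟩ := hW δ hδ
  have hsmall : ∀ᶠ n in atTop, |c n| * max M 1 < ε := by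
    have := hc.abs.mul_const (max M 1)
    rw [abs_zero, zero_mul] at this
    exact this.eventually (gt_mem_nhds hε)
  filter_upwards [hM, hsmall] with n hn hcn
  refine le_trans (measure_mono fun ω hω => ?_) hn
  simp only [Set.mem_ofPred_eq, Pi.zero_apply, sub_zero, norm_smul, Real.norm_eq_abs] at hω ⊢
  by_contra! hle
  have : |c n| * ‖W n ω‖ ≤ |c n| * max M 1 :=
    mul_le_mul_of_nonneg_left (hle.trans (le_max_left _ _)) (abs_nonneg _)
  linarith

/-- Once `r n` is large, `‖r n • H‖ ≤ M` forces `H` into the neighbourhood where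
`‖g h‖ ≤ C ‖h‖`. -/
lemma eventually_measure_lt_norm_smul_comp_le {g : E → F} {C : ℝ} (hC : 0 ≤ C)
    (hg : ∀ᶠ h in 𝓝 0, ‖g h‖ ≤ C * ‖h‖) {r : ℕ → ℝ} (hr : Tendsto r atTop atTop)
    (H : ℕ → Ω → E) (M : ℝ) :
    ∀ᶠ n in atTop, P {ω | C * M < ‖r n • g (H n ω)‖} ≤ P {ω | M < ‖r n • H n ω‖} := by
  obtain ⟨ρ, hρ, hρg⟩ := Metric.eventually_nhds_iff.1 hg
  filter_upwards [hr.eventually_gt_atTop 0, hr.eventually_gt_atTop (M / ρ)] with n hr0 hrM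
  refine measure_mono fun ω hω => ?_
  simp only [Set.mem_ofPred_eq, norm_smul, Real.norm_of_nonneg hr0.le] at hω ⊢
  by_contra! hle
  have hH : ‖H n ω‖ < ρ := by
    rw [div_lt_iff₀ hρ] at hrM
    nlinarith
  have := hρg (by simpa using hH)
  nlinarith [mul_le_mul_of_nonneg_left this hr0.le]

lemma BoundedInProbability.smul_comp_of_isBigO {r : ℕ → ℝ} {H : ℕ → Ω → E}
    (hH : BoundedInProbability P fun n ω => r n • H n ω) (hr : Tendsto r atTop atTop)
    {g : E → F} (hg : g =O[𝓝 0] fun h => h) :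
    BoundedInProbability P fun n ω => r n • g (H n ω) := by
  obtain ⟨C, hC, hgC⟩ := hg.exists_pos
  intro δ hδ
  obtain ⟨M, hM⟩ := hH δ hδ
  refine ⟨C * M, ?_⟩
  filter_upwards [hM, eventually_measure_lt_norm_smul_comp_le hC.le hgC.bound hr H M]
    with n hn hle using hle.trans hn

lemma BoundedInProbability.tendstoInMeasure_smul_comp_of_isLittleO {r : ℕ → ℝ}
    {H : ℕ → Ω → E} (hH : BoundedInProbability P fun n ω => r n • H n ω)
    (hr : Tendsto r atTop atTop) {g : E → F} (hg : g =o[𝓝 0] fun h => h) :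
    TendstoInMeasure P (fun n ω => r n • g (H n ω)) atTop 0 := by
  rw [tendstoInMeasure_iff_norm]
  intro ε hε
  refine ENNReal.tendsto_nhds_zero.2 fun δ hδ => ?_
  obtain ⟨M, hM⟩ := hH δ hδ
  set M₀ := max M 1
  have hM₀ : 0 < M₀ := lt_max_of_lt_right one_pos
  have hc : 0 < ε / (2 * M₀) := by positivity
  filter_upwards [hM, eventually_measure_lt_norm_smul_comp_le (P := P) hc.le (hg.def hc) hr H M₀]
    with n hn hle
  have hεM₀ : ε / (2 * M₀) * M₀ = ε / 2 := by field_simp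
  calc _ ≤ P {ω | ε / (2 * M₀) * M₀ < ‖r n • g (H n ω)‖} := measure_mono fun ω hω => by
          simp only [Set.mem_ofPred_eq, Pi.zero_apply, sub_zero] at hω ⊢
          linarith
    _ ≤ P {ω | M₀ < ‖r n • H n ω‖} := hle
    _ ≤ P {ω | M < ‖r n • H n ω‖} := measure_mono fun ω hω => (le_max_left M 1).trans_lt hω
    _ ≤ δ := hn

lemma BoundedInProbability.smul_sub_of_hasFDerivAt {r : ℕ → ℝ} {X : ℕ → Ω → E} {x₀ : E}
    (hX : BoundedInProbability P fun n ω => r n • (X n ω - x₀)) (hr : Tendsto r atTop atTop)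
    {f : E → F} {f' : E →L[ℝ] F} (hf : HasFDerivAt f f' x₀) :
    BoundedInProbability P fun n ω => r n • (f (X n ω) - f x₀) := by
  have hg : (fun h => f (x₀ + h) - f x₀) =O[𝓝 0] fun h => h := by
    have hshift : Tendsto (fun h : E => x₀ + h) (𝓝 0) (𝓝 x₀) := by
      simpa using (continuous_const_add x₀).tendsto 0
    simpa [Function.comp_def] using hf.isBigO_sub.comp_tendsto hshift
  simpa using hX.smul_comp_of_isBigO hr hg

/-- The delta method. -/
lemma BoundedInProbability.tendstoInMeasure_smul_sub_sub_of_hasFDerivAt {r : ℕ → ℝ}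
    {X : ℕ → Ω → E} {x₀ : E}
    (hX : BoundedInProbability P fun n ω => r n • (X n ω - x₀)) (hr : Tendsto r atTop atTop)
    {f : E → F} {f' : E →L[ℝ] F} (hf : HasFDerivAt f f' x₀) :
    TendstoInMeasure P (fun n ω => r n • (f (X n ω) - f x₀ - f' (X n ω - x₀))) atTop 0 := by
  simpa using hX.tendstoInMeasure_smul_comp_of_isLittleO hr
    (hasFDerivAt_iff_isLittleO_nhds_zero.1 hf)

end BoundedInProbability

section CharacteristicFunction

variable {Ω : Type*} [MeasurableSpace Ω] {P : Measure Ω} [IsProbabilityMeasure P]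

lemma TendstoInMeasure.tendsto_integral_comp {E : Type*} [PseudoMetricSpace E]
    [MeasurableSpace E] [BorelSpace E] {Z : ℕ → Ω → E} {c : E}
    (hZ : TendstoInMeasure P Z atTop fun _ => c) (hZm : ∀ n, AEMeasurable (Z n) P) (f : E →ᵇ ℝ) :
    Tendsto (fun n => ∫ ω, f (Z n ω) ∂P) atTop (𝓝 (f c)) := by
  have h := ProbabilityMeasure.tendsto_iff_forall_integral_tendsto.1
    (hZ.tendstoInDistribution hZm).tendsto f
  simpa [integral_map (hZm _) f.continuous.aestronglyMeasurable,
    integral_dirac' _ _ f.continuous.stronglyMeasurable] using h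

lemma integrable_cexp_I_mul_ofReal {X : Ω → ℝ} (hX : AEMeasurable X P) :
    Integrable (fun ω => Complex.exp (Complex.I * X ω)) P :=
  .of_bound (by fun_prop) 1 (.of_forall fun ω => (Complex.norm_exp_I_mul_ofReal _).le)

/-- Slutsky's lemma for characteristic functions. -/
lemma tendsto_integral_cexp_add_of_tendstoInMeasure {X Z : ℕ → Ω → ℝ}
    (hX : ∀ n, AEMeasurable (X n) P) (hZ : ∀ n, AEMeasurable (Z n) P) {c : ℂ}
    (hXc : Tendsto (fun n => ∫ ω, Complex.exp (Complex.I * X n ω) ∂P) atTop (𝓝 c))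
    (hZ0 : TendstoInMeasure P Z atTop 0) :
    Tendsto (fun n => ∫ ω, Complex.exp (Complex.I * ↑(X n ω + Z n ω)) ∂P) atTop (𝓝 c) := by
  have hbound : ∀ x : ℝ, ‖Complex.exp (Complex.I * x) - 1‖ ≤ 2 := fun x =>
    (norm_sub_le _ _).trans (by simp; norm_num)
  let f : ℝ →ᵇ ℝ := .mkOfBound ⟨fun x => ‖Complex.exp (Complex.I * x) - 1‖, by fun_prop⟩ 2
    fun x y => by
      simp only [ContinuousMap.coe_mk, Real.dist_eq, abs_le]
      constructor <;> linarith [hbound x, hbound y, norm_nonneg (Complex.exp (Complex.I * x) - 1),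
        norm_nonneg (Complex.exp (Complex.I * y) - 1)]
  have hf : Tendsto (fun n => ∫ ω, ‖Complex.exp (Complex.I * Z n ω) - 1‖ ∂P) atTop (𝓝 0) := by
    simpa [f] using TendstoInMeasure.tendsto_integral_comp (c := 0) hZ0 hZ f
  have hle : ∀ n, ‖(∫ ω, Complex.exp (Complex.I * ↑(X n ω + Z n ω)) ∂P) -
      ∫ ω, Complex.exp (Complex.I * X n ω) ∂P‖ ≤
      ∫ ω, ‖Complex.exp (Complex.I * Z n ω) - 1‖ ∂P := fun n => by
    rw [← integral_sub
      (integrable_cexp_I_mul_ofReal (X := fun ω => X n ω + Z n ω) ((hX n).add (hZ n)))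
      (integrable_cexp_I_mul_ofReal (hX n))]
    refine (norm_integral_le_integral_norm _).trans_eq (integral_congr_ae (.of_forall fun ω => ?_))
    simp only [Complex.ofReal_add, mul_add, Complex.exp_add]
    rw [← mul_sub_one, norm_mul, Complex.norm_exp_I_mul_ofReal, one_mul]
  have hdiff := tendsto_zero_iff_norm_tendsto_zero.2
    (squeeze_zero (fun n => norm_nonneg _) hle hf)
  simpa using hdiff.add hXc

lemma isTightMeasureSet_range_map_of_tendsto_integral_cexp {ι : Type*} [Fintype ι]
    {Y : ℕ → Ω → ι → ℝ} (hY : ∀ n, AEMeasurable (Y n) P) {f : (ι → ℝ) → ℂ}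
    (hf : ContinuousAt f 0)
    (h : ∀ t, Tendsto (fun n => ∫ ω, Complex.exp (Complex.I * ↑(∑ i, t i * Y n ω i)) ∂P)
      atTop (𝓝 (f t))) :
    IsTightMeasureSet (Set.range fun n => P.map (Y n)) := by
  have hYL : ∀ n, AEMeasurable (fun ω => WithLp.toLp 2 (Y n ω)) P := fun n =>
    (PiLp.continuous_toLp 2 _).measurable.comp_aemeasurable (hY n)
  have : ∀ n, IsProbabilityMeasure (P.map fun ω => WithLp.toLp 2 (Y n ω)) := fun n =>
    Measure.isProbabilityMeasure_map (hYL n)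
  have htight := isTightMeasureSet_of_tendsto_charFun
    (μ := fun n => P.map fun ω => WithLp.toLp 2 (Y n ω)) (f := fun t => f (WithLp.ofLp t))
    (hf.comp_of_eq (PiLp.continuous_ofLp 2 _).continuousAt rfl) fun t => by
      convert h (WithLp.ofLp t) using 2 with n
      rw [charFun_apply, integral_map (hYL n) (by fun_prop)]
      congr 1 with ω
      rw [mul_comm, EuclideanSpace.inner_eq_star_dotProduct]
      simp [dotProduct]
  convert htight.map (PiLp.continuous_ofLp 2 fun _ : ι => ℝ)
  rw [← Set.range_comp]
  congr 1 with n : 1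
  rw [Function.comp_apply, AEMeasurable.map_map_of_aemeasurable (by fun_prop) (hYL n)]
  rfl

lemma boundedInProbability_of_tendsto_integral_cexp_gaussian {ι : Type*} [Fintype ι]
    {r : ℕ → ℝ} {X : ℕ → Ω → ι → ℝ} (hX : ∀ n, Measurable (X n)) (x₀ : ι → ℝ)
    (Q : Matrix ι ι ℝ)
    (h : ∀ t : ι → ℝ, Tendsto (fun n => ∫ ω, Complex.exp (Complex.I *
      ((r n * ∑ i, t i * (X n ω i - x₀ i) : ℝ) : ℂ)) ∂P) atTop
      (𝓝 (Complex.exp ((-(∑ i, ∑ j, t i * Q i j * t j) / 2 : ℝ) : ℂ)))) :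
    BoundedInProbability P fun n ω => r n • (X n ω - x₀) := by
  refine boundedInProbability_of_isTightMeasureSet (fun n => by fun_prop)
    (isTightMeasureSet_range_map_of_tendsto_integral_cexp (fun n => by fun_prop)
      (f := fun t => Complex.exp ((-(∑ i, ∑ j, t i * Q i j * t j) / 2 : ℝ) : ℂ))
      (Continuous.continuousAt (by fun_prop)) fun t => ?_)
  simpa [Finset.mul_sum, mul_left_comm] using h t

end CharacteristicFunction

lemma tendsto_integral_cexp_two_sample_delta_method {Ω E : Type*} [MeasurableSpace Ω]
    {P : Measure Ω} [IsProbabilityMeasure P] [NormedAddCommGroup E] [NormedSpace ℝ E]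
    [MeasurableSpace E] [BorelSpace E] [SecondCountableTopology E]
    {Φ : E → ℝ} (hΦm : Measurable Φ) {x₀ x₁ : E} {Φ'₀ Φ'₁ : E →L[ℝ] ℝ}
    (hΦ₀ : HasFDerivAt Φ Φ'₀ x₀) (hΦ₁ : HasFDerivAt Φ Φ'₁ x₁) {r₀ r₁ : ℕ → ℝ}
    (hr₀ : Tendsto r₀ atTop atTop) (hr₁ : Tendsto r₁ atTop atTop)
    (hr : Tendsto (fun n => r₁ n / r₀ n) atTop (𝓝 0)) {X₀ X₁ : ℕ → Ω → E}
    (hX₀ : ∀ n, Measurable (X₀ n)) (hX₁ : ∀ n, Measurable (X₁ n))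
    (hb₀ : BoundedInProbability P fun n ω => r₀ n • (X₀ n ω - x₀))
    (hb₁ : BoundedInProbability P fun n ω => r₁ n • (X₁ n ω - x₁)) {c : ℂ}
    (hlin : Tendsto (fun n => ∫ ω, Complex.exp (Complex.I * ↑(r₁ n * Φ'₁ (X₁ n ω - x₁))) ∂P)
      atTop (𝓝 c)) :
    Tendsto (fun n => ∫ ω, Complex.exp (Complex.I *
      ↑(r₁ n * ((Φ (X₁ n ω) - Φ x₁) - (Φ (X₀ n ω) - Φ x₀)))) ∂P) atTop (𝓝 c) := by
  have hZ₁ := hb₁.tendstoInMeasure_smul_sub_sub_of_hasFDerivAt hr₁ hΦ₁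
  have hZ₀ := (hb₀.smul_sub_of_hasFDerivAt hr₀ hΦ₀).tendstoInMeasure_smul
    (by simpa using hr.neg)
  have h := tendsto_integral_cexp_add_of_tendstoInMeasure (fun n => by fun_prop)
    (fun n => by fun_prop) (tendsto_integral_cexp_add_of_tendstoInMeasure (fun n => by fun_prop)
      (fun n => by fun_prop) hlin hZ₁) hZ₀
  refine h.congr' ?_
  filter_upwards [hr₀.eventually_ne_atTop 0] with n hn
  congr 1 with ω
  simp only [smul_eq_mul]
  field_simp
  ring_nf

lemma sum_sum_mul_mul_transpose_mul {ι κ R : Type*} [Fintype ι] [Fintype κ] [CommSemiring R]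
    (J : Matrix ι κ R) (M : Matrix κ κ R) (u : ι → R) :
    ∑ i, ∑ j, u i * (J * M * J.transpose) i j * u j =
      ∑ i, ∑ j, (u ᵥ* J) i * M i j * (u ᵥ* J) j := by
  classical
  rw [← Matrix.toBilin'_apply, ← Matrix.toBilin'_apply, Matrix.toBilin'_apply',
    Matrix.toBilin'_apply', ← Matrix.mulVec_mulVec, ← Matrix.mulVec_mulVec,
    Matrix.mulVec_transpose, Matrix.dotProduct_mulVec]

lemma vecMul_of_finCases_ite {m : ℕ} (u : Fin (m + 1) → ℝ) (a : Fin m → ℝ) :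
    u ᵥ* (Matrix.of fun i j => Fin.cases (a j) (fun i' => if i' = j then (1 : ℝ) else 0) i :
      Matrix (Fin (m + 1)) (Fin m) ℝ) =
      fun j => u 0 * a j + u j.succ := by
  ext j
  simp [Matrix.vecMul, dotProduct, Fin.sum_univ_succ]

lemma hasFDerivAt_const_mul_add_sum_mul {ι : Type*} [Fintype ι] {A : (ι → ℝ) → ℝ}
    {η a : ι → ℝ} (hA : DifferentiableAt ℝ A η) (hgrad : ∀ v, fderiv ℝ A η v = -∑ i, a i * v i)
    (c : ℝ) (v : ι → ℝ) :
    HasFDerivAt (fun x => c * A x + ∑ i, v i * x i)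
      (∑ i, (c * -a i + v i) • ContinuousLinearMap.proj (R := ℝ) (φ := fun _ : ι => ℝ) i) η := by
  refine ((hA.hasFDerivAt.const_mul c).fun_add
    (HasFDerivAt.fun_sum fun i _ => (hasFDerivAt_apply i η).const_mul (v i))).congr_fderiv ?_
  ext h
  simp [hgrad, Finset.mul_sum, add_mul, Finset.sum_add_distrib, mul_assoc]

lemma measurable_expFamA {m : ℕ} {B : ℝ → ℝ} {qm : ℝ → Fin m → ℝ} (hB : Measurable B)
    (hqm : Measurable qm) : Measurable (expFamA m B qm) :=
  (Real.measurable_log.comp (StronglyMeasurable.integral_prod_right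
    (by fun_prop : Measurable fun p : (Fin m → ℝ) × ℝ =>
      B p.2 * Real.exp (∑ i, p.1 i * qm p.2 i)).stronglyMeasurable).measurable).neg

theorem expfam_mle_drm_parameter_clt_general
    (m : ℕ) (B : ℝ → ℝ) (qm : ℝ → Fin m → ℝ) (hqm : Measurable qm)
    (hBmeas : Measurable B)
    -- the true natural parameters and the two population distributions
    (ηstar : Fin 2 → Fin m → ℝ)
    (G : Fin 2 → Measure ℝ)
    {Ω : Type*} [MeasurableSpace Ω] (P : Measure Ω) [IsProbabilityMeasure P]
    -- the sample sizes, with n₁/n₀ → 0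
    (n₀ n₁ : ℕ → ℕ)
    (hn₀ : Tendsto (fun n => (n₀ n : ℝ)) atTop atTop)
    (hn₁ : Tendsto (fun n => (n₁ n : ℝ)) atTop atTop)
    (hsmall : Tendsto (fun n => (n₁ n : ℝ) / (n₀ n : ℝ)) atTop (𝓝 0))
    -- the maximum likelihood estimators of η₀, η₁ from the two independent samples
    (ηtil : Fin 2 → ℕ → Ω → Fin m → ℝ) (hηtilMeas : ∀ k n, Measurable (ηtil k n))
    -- Var_k[q₋(X)], assumed positive definite
    (V : Fin 2 → Matrix (Fin m) (Fin m) ℝ)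
    -- asymptotic normality of the MLEs: √n_k (η̃_k - η_k*) →d N(0, Var_k⁻¹[q₋])
    (hCLT : ∀ k : Fin 2, ∀ t : Fin m → ℝ,
      Tendsto
        (fun n => ∫ ω, Complex.exp (Complex.I *
            ((Real.sqrt (![n₀, n₁] k n) *
              ∑ i, t i * (ηtil k n ω i - ηstar k i) : ℝ) : ℂ)) ∂P)
        atTop
        (𝓝 (Complex.exp ((-(∑ i, ∑ j, t i * ((V k)⁻¹ i j) * t j) / 2 : ℝ) : ℂ))))
    -- A is differentiable at η_k* with gradient -E_k[q₋(X)]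
    (hA : ∀ k : Fin 2, DifferentiableAt ℝ (expFamA m B qm) (ηstar k) ∧
      ∀ v : Fin m → ℝ, fderiv ℝ (expFamA m B qm) (ηstar k) v =
        -∑ i, (∫ x, qm x i ∂(G k)) * v i)
    -- the matrix J: first row -E₁[q₋]ᵀ, remaining rows the identity
    (J : Matrix (Fin (m + 1)) (Fin m) ℝ)
    (hJ : J = Matrix.of fun i j =>
      Fin.cases (-(∫ x, qm x j ∂(G 1))) (fun i' => if i' = j then (1 : ℝ) else 0) i) :
    ∀ u : Fin (m + 1) → ℝ,
      Tendsto
        (fun n => ∫ ω, Complex.exp (Complex.I *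
            ((Real.sqrt (n₁ n) * ∑ i, u i *
              (Fin.cons
                (expFamA m B qm (ηtil 1 n ω) - expFamA m B qm (ηtil 0 n ω) -
                  (expFamA m B qm (ηstar 1) - expFamA m B qm (ηstar 0)))
                (fun i' => (ηtil 1 n ω i' - ηtil 0 n ω i') - (ηstar 1 i' - ηstar 0 i'))
                  : Fin (m + 1) → ℝ) i : ℝ) : ℂ)) ∂P)
        atTop
        (𝓝 (Complex.exp
          ((-(∑ i, ∑ j, u i * ((J * (V 1)⁻¹ * J.transpose) i j) * u j) / 2 : ℝ) : ℂ))) := by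
  intro u
  have hAm := measurable_expFamA hBmeas hqm
  have hΦ (k : Fin 2) := hasFDerivAt_const_mul_add_sum_mul (hA k).1 (hA k).2 (u 0) (u ·.succ)
  have hb (k : Fin 2) := boundedInProbability_of_tendsto_integral_cexp_gaussian
    (hηtilMeas k) (ηstar k) _ (hCLT k)
  have hsqrt {N : ℕ → ℕ} (hN : Tendsto (fun n => (N n : ℝ)) atTop atTop) :
      Tendsto (fun n => Real.sqrt (N n)) atTop atTop := Real.tendsto_sqrt_atTop.comp hN
  have hratio : Tendsto (fun n => Real.sqrt (n₁ n) / Real.sqrt (n₀ n)) atTop (𝓝 0) := by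
    simpa [Function.comp_def, Real.sqrt_div' _ (Nat.cast_nonneg _)] using
      (Real.continuous_sqrt.tendsto 0).comp hsmall
  have hlin := hCLT 1 (fun i => u 0 * -(∫ x, qm x i ∂(G 1)) + u i.succ)
  rw [hJ, sum_sum_mul_mul_transpose_mul, vecMul_of_finCases_ite]
  refine (tendsto_integral_cexp_two_sample_delta_method (by fun_prop) (hΦ 0) (hΦ 1)
    (hsqrt hn₀) (hsqrt hn₁) hratio (hηtilMeas 0) (hηtilMeas 1) (by simpa using hb 0)
    (by simpa using hb 1) (by simpa using hlin)).congr fun n => ?_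
  congr 1 with ω
  congr 3
  simp only [Fin.sum_univ_succ, Fin.cons_zero, Fin.cons_succ, mul_sub,
    Finset.sum_sub_distrib]
  ring

/-- In the two-sample exponential family model, if the MLEs satisfy
`√n_k (η̃_k - η_k*) →d N(0, Var_k⁻¹[q₋])` with `Var_k[q₋]` positive definite, `A` is
differentiable at `η_k*` with `∇A(η_k*) = -E_k[q₋(X)]`, and `n₁/n₀ → 0`, then the MLE
`θ̃ = (A(η̃₁) - A(η̃₀), (η̃₁ - η̃₀)ᵀ)ᵀ` of the DRM parameter satisfies
`√n₁ (θ̃ - θ*) →d N(0, J Var₁⁻¹[q₋] Jᵀ)` (convergence in distribution stated via pointwise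
convergence of characteristic functions). -/
theorem expfam_mle_drm_parameter_clt
    (m : ℕ) (B : ℝ → ℝ) (hB : ∀ x, 0 ≤ B x) (qm : ℝ → Fin m → ℝ) (hqm : Measurable qm)
    (hBmeas : Measurable B)
    -- the true natural parameters and the two population distributions
    (ηstar : Fin 2 → Fin m → ℝ)
    (G : Fin 2 → Measure ℝ) (hG : ∀ k, G k = expFamMeasure m B qm (ηstar k))
    (hGprob : ∀ k, IsProbabilityMeasure (G k))
    {Ω : Type*} [MeasurableSpace Ω] (P : Measure Ω) [IsProbabilityMeasure P]
    -- the sample sizes, with n₁/n₀ → 0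
    (n₀ n₁ : ℕ → ℕ)
    (hn₀ : Tendsto (fun n => (n₀ n : ℝ)) atTop atTop)
    (hn₁ : Tendsto (fun n => (n₁ n : ℝ)) atTop atTop)
    (hsmall : Tendsto (fun n => (n₁ n : ℝ) / (n₀ n : ℝ)) atTop (𝓝 0))
    -- the maximum likelihood estimators of η₀, η₁ from the two independent samples
    (ηtil : Fin 2 → ℕ → Ω → Fin m → ℝ) (hηtilMeas : ∀ k n, Measurable (ηtil k n))
    (hηindep : ∀ n, IndepFun (ηtil 0 n) (ηtil 1 n) P)
    -- Var_k[q₋(X)], assumed positive definite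
    (V : Fin 2 → Matrix (Fin m) (Fin m) ℝ)
    (hV : ∀ k, V k = Matrix.of fun i j =>
      (∫ x, qm x i * qm x j ∂(G k)) - (∫ x, qm x i ∂(G k)) * (∫ x, qm x j ∂(G k)))
    (hVpos : ∀ k, (V k).PosDef)
    -- asymptotic normality of the MLEs: √n_k (η̃_k - η_k*) →d N(0, Var_k⁻¹[q₋])
    (hCLT : ∀ k : Fin 2, ∀ t : Fin m → ℝ,
      Tendsto
        (fun n => ∫ ω, Complex.exp (Complex.I *
            ((Real.sqrt (![n₀, n₁] k n) *
              ∑ i, t i * (ηtil k n ω i - ηstar k i) : ℝ) : ℂ)) ∂P)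
        atTop
        (𝓝 (Complex.exp ((-(∑ i, ∑ j, t i * ((V k)⁻¹ i j) * t j) / 2 : ℝ) : ℂ))))
    -- A is differentiable at η_k* with gradient -E_k[q₋(X)]
    (hA : ∀ k : Fin 2, DifferentiableAt ℝ (expFamA m B qm) (ηstar k) ∧
      ∀ v : Fin m → ℝ, fderiv ℝ (expFamA m B qm) (ηstar k) v =
        -∑ i, (∫ x, qm x i ∂(G k)) * v i)
    -- the matrix J: first row -E₁[q₋]ᵀ, remaining rows the identity
    (J : Matrix (Fin (m + 1)) (Fin m) ℝ)
    (hJ : J = Matrix.of fun i j =>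
      Fin.cases (-(∫ x, qm x j ∂(G 1))) (fun i' => if i' = j then (1 : ℝ) else 0) i) :
    ∀ u : Fin (m + 1) → ℝ,
      Tendsto
        (fun n => ∫ ω, Complex.exp (Complex.I *
            ((Real.sqrt (n₁ n) * ∑ i, u i *
              (Fin.cons
                (expFamA m B qm (ηtil 1 n ω) - expFamA m B qm (ηtil 0 n ω) -
                  (expFamA m B qm (ηstar 1) - expFamA m B qm (ηstar 0)))
                (fun i' => (ηtil 1 n ω i' - ηtil 0 n ω i') - (ηstar 1 i' - ηstar 0 i'))
                  : Fin (m + 1) → ℝ) i : ℝ) : ℂ)) ∂P)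
        atTop
        (𝓝 (Complex.exp
          ((-(∑ i, ∑ j, u i * ((J * (V 1)⁻¹ * J.transpose) i j) * u j) / 2 : ℝ) : ℂ))) :=
  expfam_mle_drm_parameter_clt_general m B qm hqm hBmeas ηstar G P n₀ n₁ hn₀ hn₁ hsmall ηtil
    hηtilMeas V hCLT hA J hJ
end
end

section
/- Under the two-sample density ratio model with Conditions (i)–(iii), for every multi-index α of order |α| = 3 the third-order partial derivatives of the profile log empirical likelihood are of order n₁ uniformly near the truth: sup_{‖θ − θ*‖ ≤ n₁^{−1/3}} |∂^α ℓ_n(θ)/∂θ^α| = O_p(n₁) as n₀, n₁ → ∞ with n₀/n₁ → ∞, i.e., n₁^{−1} times this supremum is bounded in probability. -/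
/-!
Every summand of the third derivative has the form `w · q_a q_b q_c` with
`w = n₀ · n₁e · (n₀ - n₁e) / (n₀ + n₁e)³`, `e = exp (θᵀ q)`, and `w ≤ min 1 (n₁e / n₀)`.
Bounding the cubic by `6 / r³ · exp (r ‖q‖₁)`, and `e` by `exp (θ*ᵀ q + r ‖q‖₁)` once the ball
`‖θ - θ*‖ ≤ n₁^{-1/3}` has shrunk into the box of radius `r` around `θ*`, the supremum over the
ball is dominated by `(n₁ / n₀) Σ_{j < n₀} F₀ (x₀ⱼ) + Σ_{j < n₁} F₁ (x₁ⱼ)`. The envelopes `F₀`,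
`F₁` are integrable under `G₀`, `G₁` by Condition (iii), after expanding `exp (r ‖q‖₁)` over sign
patterns. The dominating variable has mean `O(n₁)`, and Markov's inequality gives `O_p(n₁)`.
-/

open MeasureTheory ProbabilityTheory Filter
open scoped BigOperators Topology

noncomputable section

/-- `Z_n = O_p(a_n)`: `Z_n / a_n` is bounded in probability. -/
def IsBigOpProb {Ω : Type*} [MeasurableSpace Ω] (P : Measure Ω)
    (Z : ℕ → Ω → ℝ) (a : ℕ → ℝ) : Prop :=
  ∀ ε : ℝ, 0 < ε → ∃ C : ℝ, 0 < C ∧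
    ∀ᶠ n in Filter.atTop, P {ω | C * a n ≤ |Z n ω|} ≤ ENNReal.ofReal ε

/-- The third-order partial derivative `∂³ℓ_n(θ)/∂θ_a ∂θ_b ∂θ_c` of the dual/profile log
empirical likelihood `ℓ_n(θ) = -Σ_{k,j} log[n₀ + n₁ exp(θᵀ q(x_{kj}))] + Σ_j θᵀ q(x_{1j})`
of the two-sample density ratio model. -/
def drmThirdDeriv {Ω : Type*} (d : ℕ) (q : ℝ → Fin (d + 1) → ℝ)
    (X : Fin 2 → ℕ → Ω → ℝ) (n₀ n₁ : ℕ) (θ : Fin (d + 1) → ℝ) (ω : Ω)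
    (a b c : Fin (d + 1)) : ℝ :=
  -(∑ k : Fin 2, ∑ j ∈ Finset.range (![n₀, n₁] k),
      (n₀ : ℝ) * (n₁ : ℝ) * Real.exp (∑ l, θ l * q (X k j ω) l) *
        ((n₀ : ℝ) - (n₁ : ℝ) * Real.exp (∑ l, θ l * q (X k j ω) l))
        / ((n₀ : ℝ) + (n₁ : ℝ) * Real.exp (∑ l, θ l * q (X k j ω) l)) ^ 3
        * q (X k j ω) a * q (X k j ω) b * q (X k j ω) c)

open Finset Real

lemma mul_abs_sub_div_add_pow_three_le_one {u w : ℝ} (hu : 0 ≤ u) (hw : 0 ≤ w) :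
    u * w * |u - w| / (u + w) ^ 3 ≤ 1 := by
  refine div_le_one_of_le₀ ?_ (by positivity)
  have h : |u - w| ≤ u + w := abs_sub_le_of_nonneg_of_le hu (by linarith) hw (by linarith)
  calc u * w * |u - w| ≤ (u + w) ^ 2 * (u + w) := by gcongr; nlinarith
    _ = (u + w) ^ 3 := by ring

lemma mul_abs_sub_div_add_pow_three_le_div {u w : ℝ} (hu : 0 < u) (hw : 0 ≤ w) :
    u * w * |u - w| / (u + w) ^ 3 ≤ w / u := by
  rw [div_le_div_iff₀ (by positivity) hu]
  have h : |u - w| ≤ u + w := abs_sub_le_of_nonneg_of_le hu.le (by linarith) hw (by linarith)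
  calc u * w * |u - w| * u = w * (u ^ 2 * |u - w|) := by ring
    _ ≤ w * ((u + w) ^ 2 * (u + w)) := by gcongr; nlinarith
    _ = w * (u + w) ^ 3 := by ring

lemma pow_three_le_six_mul_exp {x : ℝ} (hx : 0 ≤ x) : x ^ 3 ≤ 6 * exp x := by
  have h := pow_div_factorial_le_exp x hx 3
  norm_num [Nat.factorial] at h
  linarith

section Vectors

variable {ι : Type*} [Fintype ι]

lemma abs_mul_mul_le_six_div_mul_exp {r : ℝ} (hr : 0 < r) (v : ι → ℝ) (a b c : ι) :
    |v a * v b * v c| ≤ 6 / r ^ 3 * exp (r * ∑ i, |v i|) := by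
  set S := ∑ i, |v i|
  have hS : ∀ i, |v i| ≤ S := fun i => single_le_sum (fun l _ => abs_nonneg (v l)) (mem_univ i)
  calc |v a * v b * v c| = |v a| * |v b| * |v c| := by rw [abs_mul, abs_mul]
    _ ≤ S * S * S := by gcongr <;> exact hS _
    _ = (r * S) ^ 3 / r ^ 3 := by field_simp
    _ ≤ 6 * exp (r * S) / r ^ 3 := by
        gcongr; exact pow_three_le_six_mul_exp (by positivity)
    _ = 6 / r ^ 3 * exp (r * S) := by ring

lemma sum_mul_le_sum_mul_add_mul_sum_abs {θ θ₀ : ι → ℝ} {r : ℝ} (hθ : ∀ i, |θ i - θ₀ i| ≤ r)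
    (v : ι → ℝ) : ∑ i, θ i * v i ≤ ∑ i, θ₀ i * v i + r * ∑ i, |v i| := by
  rw [mul_sum, ← sum_add_distrib]
  refine sum_le_sum fun i _ => ?_
  have : (θ i - θ₀ i) * v i ≤ r * |v i| :=
    (le_abs_self _).trans (by rw [abs_mul]; gcongr; exact hθ i)
  linarith

lemma abs_le_sqrt_sum_sq (v : ι → ℝ) (i : ι) : |v i| ≤ √(∑ j, v j ^ 2) :=
  abs_le_sqrt (single_le_sum (fun j _ => sq_nonneg (v j)) (mem_univ i))

lemma exists_pos_sqrt_sum_sq_lt {δ : ℝ} (hδ : 0 < δ) :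
    ∃ r > 0, ∀ v : ι → ℝ, (∀ i, |v i| ≤ r) → √(∑ i, v i ^ 2) < δ := by
  refine ⟨δ / (Fintype.card ι + 1), by positivity, fun v hv => ?_⟩
  rw [sqrt_lt' hδ]
  calc ∑ i, v i ^ 2 ≤ ∑ _i : ι, (δ / (Fintype.card ι + 1)) ^ 2 :=
        sum_le_sum fun i _ => sq_le_sq.mpr ((hv i).trans (le_abs_self _))
    _ = Fintype.card ι / (Fintype.card ι + 1) ^ 2 * δ ^ 2 := by
        rw [sum_const, card_univ, nsmul_eq_mul]; field_simp
    _ < δ ^ 2 := mul_lt_of_lt_one_left (by positivity) <| by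
        rw [div_lt_one (by positivity)]; nlinarith

def expEnvelope (θ₀ : ι → ℝ) (r : ℝ) (v : ι → ℝ) : ℝ :=
  exp (∑ i, θ₀ i * v i + r * ∑ i, |v i|)

lemma integrable_expEnvelope {α : Type*} [MeasurableSpace α] {μ : Measure α} {q : α → ι → ℝ}
    (hq : Measurable q) (θ₀ : ι → ℝ) {r : ℝ} (hr : 0 ≤ r)
    (h : ∀ θ : ι → ℝ, (∀ i, |θ i - θ₀ i| ≤ r) →
      Integrable (fun x => exp (∑ i, θ i * q x i)) μ) :
    Integrable (fun x => expEnvelope θ₀ r (q x)) μ := by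
  classical
  let θσ : (ι → Bool) → ι → ℝ := fun σ i => θ₀ i + if σ i then r else -r
  have hθσ : ∀ σ i, |θσ σ i - θ₀ i| ≤ r := by
    intro σ i
    simp only [θσ, add_sub_cancel_left]
    split_ifs <;> simp [abs_of_nonneg hr]
  refine (integrable_finsetSum univ fun σ _ => h (θσ σ) (hθσ σ)).mono' ?_ (ae_of_all _ fun x => ?_)
  · unfold expEnvelope
    have hqi := fun i => (measurable_pi_apply i).comp hq
    fun_prop
  · -- the sign pattern of `q x` selects a summand equal to the envelope
    have hsel : expEnvelope θ₀ r (q x) = exp (∑ i, θσ (fun i => decide (0 ≤ q x i)) i * q x i) := by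
      rw [expEnvelope, mul_sum, ← sum_add_distrib]
      congr 1
      refine sum_congr rfl fun i _ => ?_
      by_cases h0 : 0 ≤ q x i
      · simp [θσ, h0, abs_of_nonneg h0]; ring
      · simp [θσ, h0, abs_of_neg (not_le.mp h0)]; ring
    rw [hsel, norm_of_nonneg (exp_pos _).le]
    exact single_le_sum (f := fun σ => exp (∑ i, θσ σ i * q x i)) (fun σ _ => (exp_pos _).le)
      (mem_univ _)

end Vectors

section Expectation

variable {Ω α ι : Type*} [MeasurableSpace Ω] [MeasurableSpace α] {P : Measure Ω}
  {μ : Measure α} {F : α → ℝ}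

lemma integrable_comp_of_map_eq {Y : Ω → α} (hY : Measurable Y) (hlaw : P.map Y = μ)
    (hF : Integrable F μ) : Integrable (fun ω => F (Y ω)) P := by
  rw [← hlaw] at hF
  exact hF.comp_measurable hY

lemma integral_comp_of_map_eq {Y : Ω → α} (hY : Measurable Y) (hlaw : P.map Y = μ)
    (hF : Integrable F μ) : ∫ ω, F (Y ω) ∂P = ∫ x, F x ∂μ := by
  rw [← hlaw] at hF ⊢
  exact (integral_map hY.aemeasurable hF.aestronglyMeasurable).symm

lemma integral_sum_comp_of_map_eq {Y : ι → Ω → α} (hY : ∀ j, Measurable (Y j))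
    (hlaw : ∀ j, P.map (Y j) = μ) (hF : Integrable F μ) (s : Finset ι) :
    ∫ ω, ∑ j ∈ s, F (Y j ω) ∂P = #s * ∫ x, F x ∂μ := by
  rw [integral_finsetSum s fun j _ => integrable_comp_of_map_eq (hY j) (hlaw j) hF,
    sum_congr rfl fun j _ => integral_comp_of_map_eq (hY j) (hlaw j) hF, sum_const,
    nsmul_eq_mul]

end Expectation

lemma IsBigOpProb.of_abs_le_of_integral_le {Ω : Type*} [MeasurableSpace Ω] {P : Measure Ω}
    [IsFiniteMeasure P] {Z Y : ℕ → Ω → ℝ} {a : ℕ → ℝ} {K : ℝ} (ha : ∀ᶠ n in atTop, 0 < a n)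
    (hZY : ∀ᶠ n in atTop, ∀ ω, |Z n ω| ≤ Y n ω) (hY : ∀ n, Integrable (Y n) P)
    (hK : ∀ n, ∫ ω, Y n ω ∂P ≤ K * a n) : IsBigOpProb P Z a := by
  intro ε hε
  refine ⟨(|K| + 1) / ε, by positivity, ?_⟩
  filter_upwards [ha, hZY] with n han hn
  set C := (|K| + 1) / ε
  have hY₀ : 0 ≤ᵐ[P] Y n := ae_of_all _ fun ω => (abs_nonneg _).trans (hn ω)
  have hmarkov : C * a n * P.real {ω | C * a n ≤ Y n ω} ≤ |K| * a n :=
    (mul_meas_ge_le_integral_of_nonneg hY₀ (hY n) _).trans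
      ((hK n).trans (mul_le_mul_of_nonneg_right (le_abs_self K) han.le))
  have hp : (|K| + 1) * P.real {ω | C * a n ≤ Y n ω} ≤ |K| * ε := by
    have := le_of_mul_le_mul_right (by linarith : C * P.real _ * a n ≤ |K| * a n) han
    rwa [div_mul_eq_mul_div, div_le_iff₀ hε] at this
  calc P {ω | C * a n ≤ |Z n ω|} ≤ P {ω | C * a n ≤ Y n ω} :=
        measure_mono fun ω h => le_trans h (hn ω)
    _ = ENNReal.ofReal (P.real {ω | C * a n ≤ Y n ω}) :=
        (ofReal_measureReal (measure_ne_top _ _)).symm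
    _ ≤ ENNReal.ofReal ε := by
        gcongr
        nlinarith [abs_nonneg K, measureReal_nonneg (μ := P) (s := {ω | C * a n ≤ Y n ω})]

section DensityRatioModel

variable {ι : Type*} [Fintype ι]

def drmSummand (N₀ N₁ : ℝ) (θ v : ι → ℝ) (a b c : ι) : ℝ :=
  N₀ * N₁ * exp (∑ l, θ l * v l) * (N₀ - N₁ * exp (∑ l, θ l * v l))
    / (N₀ + N₁ * exp (∑ l, θ l * v l)) ^ 3 * v a * v b * v c

lemma drmThirdDeriv_eq_neg_sum_drmSummand {Ω : Type*} (d : ℕ) (q : ℝ → Fin (d + 1) → ℝ)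
    (X : Fin 2 → ℕ → Ω → ℝ) (n₀ n₁ : ℕ) (θ : Fin (d + 1) → ℝ) (ω : Ω) (a b c : Fin (d + 1)) :
    drmThirdDeriv d q X n₀ n₁ θ ω a b c =
      -∑ k : Fin 2, ∑ j ∈ range (![n₀, n₁] k), drmSummand n₀ n₁ θ (q (X k j ω)) a b c :=
  rfl

lemma abs_drmSummand {N₀ N₁ : ℝ} (hN₀ : 0 ≤ N₀) (hN₁ : 0 ≤ N₁) (θ v : ι → ℝ) (a b c : ι) :
    |drmSummand N₀ N₁ θ v a b c| =
      N₀ * (N₁ * exp (∑ l, θ l * v l)) * |N₀ - N₁ * exp (∑ l, θ l * v l)|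
        / (N₀ + N₁ * exp (∑ l, θ l * v l)) ^ 3 * |v a * v b * v c| := by
  set E := exp (∑ l, θ l * v l)
  have hE : 0 < E := exp_pos _
  have hsplit : drmSummand N₀ N₁ θ v a b c =
      N₀ * (N₁ * E) * (N₀ - N₁ * E) / (N₀ + N₁ * E) ^ 3 * (v a * v b * v c) := by
    unfold drmSummand; ring
  rw [hsplit, abs_mul, abs_div, abs_mul, abs_of_nonneg (by positivity : 0 ≤ N₀ * (N₁ * E)),
    abs_of_nonneg (by positivity : 0 ≤ (N₀ + N₁ * E) ^ 3)]

lemma abs_drmSummand_le {N₀ N₁ r : ℝ} (hN₀ : 0 ≤ N₀) (hN₁ : 0 ≤ N₁) (hr : 0 < r)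
    (θ v : ι → ℝ) (a b c : ι) :
    |drmSummand N₀ N₁ θ v a b c| ≤ 6 / r ^ 3 * expEnvelope 0 r v := by
  rw [abs_drmSummand hN₀ hN₁]
  calc _ ≤ 1 * (6 / r ^ 3 * exp (r * ∑ i, |v i|)) :=
        mul_le_mul (mul_abs_sub_div_add_pow_three_le_one hN₀ (by positivity))
          (abs_mul_mul_le_six_div_mul_exp hr v a b c) (abs_nonneg _) zero_le_one
    _ = 6 / r ^ 3 * expEnvelope 0 r v := by simp [expEnvelope]

lemma abs_drmSummand_le_div {N₀ N₁ r : ℝ} (hN₀ : 0 < N₀) (hN₁ : 0 ≤ N₁) (hr : 0 < r)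
    {θ θ₀ : ι → ℝ} (hθ : ∀ i, |θ i - θ₀ i| ≤ r) (v : ι → ℝ) (a b c : ι) :
    |drmSummand N₀ N₁ θ v a b c| ≤ N₁ / N₀ * (6 / r ^ 3 * expEnvelope θ₀ (2 * r) v) := by
  rw [abs_drmSummand hN₀.le hN₁]
  set S := ∑ i, |v i|
  calc _ ≤ N₁ * exp (∑ l, θ l * v l) / N₀ * (6 / r ^ 3 * exp (r * S)) :=
        mul_le_mul (mul_abs_sub_div_add_pow_three_le_div hN₀ (by positivity))
          (abs_mul_mul_le_six_div_mul_exp hr v a b c) (abs_nonneg _) (by positivity)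
    _ ≤ N₁ * exp (∑ l, θ₀ l * v l + r * S) / N₀ * (6 / r ^ 3 * exp (r * S)) := by
        gcongr; exact sum_mul_le_sum_mul_add_mul_sum_abs hθ v
    _ = N₁ / N₀ * (6 / r ^ 3 * expEnvelope θ₀ (2 * r) v) := by
        rw [expEnvelope, show ∑ l, θ₀ l * v l + 2 * r * S = ∑ l, θ₀ l * v l + r * S + r * S by
          ring, exp_add (∑ l, θ₀ l * v l + r * S)]
        ring


variable {Ω : Type*} {d : ℕ}

def drmBound (F₀ F₁ : ℝ → ℝ) (X : Fin 2 → ℕ → Ω → ℝ) (n₀ n₁ : ℕ) (ω : Ω) : ℝ :=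
  n₁ / n₀ * ∑ j ∈ range n₀, F₀ (X 0 j ω) + ∑ j ∈ range n₁, F₁ (X 1 j ω)

lemma abs_drmThirdDeriv_le (q : ℝ → Fin (d + 1) → ℝ) (X : Fin 2 → ℕ → Ω → ℝ) (n₀ n₁ : ℕ)
    {r : ℝ} (hr : 0 < r) {θ θstar : Fin (d + 1) → ℝ} (hθ : ∀ i, |θ i - θstar i| ≤ r) (ω : Ω)
    (a b c : Fin (d + 1)) :
    |drmThirdDeriv d q X n₀ n₁ θ ω a b c| ≤
      drmBound (fun x => 6 / r ^ 3 * expEnvelope θstar (2 * r) (q x))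
        (fun x => 6 / r ^ 3 * expEnvelope 0 r (q x)) X n₀ n₁ ω := by
  rw [drmThirdDeriv_eq_neg_sum_drmSummand, abs_neg, Fin.sum_univ_two, drmBound, mul_sum]
  refine (abs_add_le _ _).trans (add_le_add ?_ ?_) <;>
    refine (abs_sum_le_sum_abs _ _).trans (sum_le_sum fun j hj => ?_)
  · have hn₀ : (0 : ℝ) < n₀ := Nat.cast_pos.mpr (Nat.zero_lt_of_lt (mem_range.mp hj))
    exact abs_drmSummand_le_div hn₀ (Nat.cast_nonneg _) hr hθ _ a b c
  · exact abs_drmSummand_le (Nat.cast_nonneg _) (Nat.cast_nonneg _) hr θ _ a b c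

lemma iSup_abs_drmThirdDeriv_le (q : ℝ → Fin (d + 1) → ℝ) (X : Fin 2 → ℕ → Ω → ℝ)
    (n₀ n₁ : ℕ) (θstar : Fin (d + 1) → ℝ) {ρ r : ℝ} (hr : 0 < r) (hρ₀ : 0 ≤ ρ) (hρ : ρ ≤ r)
    (ω : Ω) (a b c : Fin (d + 1)) :
    ⨆ θ : {θ : Fin (d + 1) → ℝ // √(∑ i, (θ i - θstar i) ^ 2) ≤ ρ},
        |drmThirdDeriv d q X n₀ n₁ θ.1 ω a b c| ≤
      drmBound (fun x => 6 / r ^ 3 * expEnvelope θstar (2 * r) (q x))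
        (fun x => 6 / r ^ 3 * expEnvelope 0 r (q x)) X n₀ n₁ ω :=
  have : Nonempty {θ : Fin (d + 1) → ℝ // √(∑ i, (θ i - θstar i) ^ 2) ≤ ρ} :=
    ⟨⟨θstar, by simpa using hρ₀⟩⟩
  ciSup_le fun θ => abs_drmThirdDeriv_le q X n₀ n₁ hr
    (fun i => (abs_le_sqrt_sum_sq (fun j => θ.1 j - θstar j) i).trans (θ.2.trans hρ)) ω a b c

variable [MeasurableSpace Ω] {P : Measure Ω} {G : Fin 2 → Measure ℝ}
  {X : Fin 2 → ℕ → Ω → ℝ} {F₀ F₁ : ℝ → ℝ}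

lemma integrable_drmBound (hX : ∀ k j, Measurable (X k j))
    (hlaw : ∀ k j, P.map (X k j) = G k) (hF₀ : Integrable F₀ (G 0)) (hF₁ : Integrable F₁ (G 1))
    (n₀ n₁ : ℕ) : Integrable (drmBound F₀ F₁ X n₀ n₁) P :=
  ((integrable_finsetSum _ fun j _ =>
      integrable_comp_of_map_eq (hX 0 j) (hlaw 0 j) hF₀).const_mul _).add
    (integrable_finsetSum _ fun j _ => integrable_comp_of_map_eq (hX 1 j) (hlaw 1 j) hF₁)

lemma integral_drmBound_le (hX : ∀ k j, Measurable (X k j))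
    (hlaw : ∀ k j, P.map (X k j) = G k) (hF₀ : Integrable F₀ (G 0)) (hF₁ : Integrable F₁ (G 1))
    (hF₀_nonneg : 0 ≤ F₀) (n₀ n₁ : ℕ) :
    ∫ ω, drmBound F₀ F₁ X n₀ n₁ ω ∂P ≤ (∫ x, F₀ x ∂G 0 + ∫ x, F₁ x ∂G 1) * n₁ := by
  have hsum₀ := integrable_finsetSum (range n₀) fun j _ =>
    integrable_comp_of_map_eq (μ := G 0) (P := P) (hX 0 j) (hlaw 0 j) hF₀
  have hsum₁ := integrable_finsetSum (range n₁) fun j _ =>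
    integrable_comp_of_map_eq (μ := G 1) (P := P) (hX 1 j) (hlaw 1 j) hF₁
  simp only [drmBound]
  rw [integral_add (hsum₀.const_mul _) hsum₁, integral_const_mul,
    integral_sum_comp_of_map_eq (hX 0) (hlaw 0) hF₀,
    integral_sum_comp_of_map_eq (hX 1) (hlaw 1) hF₁,
    card_range, card_range]
  have hratio : (n₁ / n₀ : ℝ) * n₀ ≤ n₁ := by
    rcases eq_or_ne (n₀ : ℝ) 0 with h | h
    · simp [h]
    · rw [div_mul_cancel₀ _ h]
  have hI₀ : 0 ≤ ∫ x, F₀ x ∂G 0 := integral_nonneg hF₀_nonneg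
  nlinarith

end DensityRatioModel

theorem drm_third_derivative_order_general
    (d : ℕ) {Ω : Type*} [MeasurableSpace Ω] (P : Measure Ω) [IsProbabilityMeasure P]
    (G : Fin 2 → Measure ℝ)
    (q : ℝ → Fin (d + 1) → ℝ) (hqmeas : Measurable q)
    (θstar : Fin (d + 1) → ℝ)
    (X : Fin 2 → ℕ → Ω → ℝ) (hXmeas : ∀ k j, Measurable (X k j))
    (hlaw : ∀ k j, Measure.map (X k j) P = G k)
    -- Condition (i)
    (n₀ n₁ : ℕ → ℕ)
    (hn₁ : Tendsto (fun n => (n₁ n : ℝ)) atTop atTop)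
    -- Condition (iii)
    (hiii : ∃ ε > 0, ∀ θ : Fin (d + 1) → ℝ,
      (Real.sqrt (∑ i, (θ i - θstar i) ^ 2) < ε ∨ Real.sqrt (∑ i, (θ i) ^ 2) < ε) →
      Integrable (fun x => Real.exp (∑ i, θ i * q x i)) (G 0) ∧
      Integrable (fun x => Real.exp (∑ i, θ i * q x i)) (G 1)) :
    ∀ a b c : Fin (d + 1),
      IsBigOpProb P
        (fun n ω =>
          ⨆ θ : {θ : Fin (d + 1) → ℝ //
              Real.sqrt (∑ i, (θ i - θstar i) ^ 2) ≤ (n₁ n : ℝ) ^ (-(1 / 3 : ℝ))},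
            |drmThirdDeriv d q X (n₀ n) (n₁ n) θ.1 ω a b c|)
        (fun n => (n₁ n : ℝ)) := by
  intro a b c
  obtain ⟨δ, hδ, hInt⟩ := hiii
  obtain ⟨r₀, hr₀, hball⟩ := exists_pos_sqrt_sum_sq_lt (ι := Fin (d + 1)) hδ
  obtain ⟨r, hr, hr₀r⟩ : ∃ r, 0 < r ∧ 2 * r = r₀ := ⟨r₀ / 2, by positivity, by ring⟩
  set F₀ := fun x => 6 / r ^ 3 * expEnvelope θstar (2 * r) (q x)
  set F₁ := fun x => 6 / r ^ 3 * expEnvelope 0 r (q x)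
  have hF₀ : Integrable F₀ (G 0) :=
    (integrable_expEnvelope hqmeas θstar (by positivity) fun θ hθ =>
      (hInt θ (.inl (hball _ fun i => (hθ i).trans_eq hr₀r))).1).const_mul _
  have hF₁ : Integrable F₁ (G 1) :=
    (integrable_expEnvelope hqmeas 0 hr.le fun θ hθ =>
      (hInt θ (.inr (hball θ fun i => by simpa using (hθ i).trans (by linarith)))).2).const_mul _
  have hF₀_nonneg : 0 ≤ F₀ := fun x => by unfold F₀ expEnvelope; positivity
  have hρ : Tendsto (fun n => (n₁ n : ℝ) ^ (-(1 / 3 : ℝ))) atTop (𝓝 0) :=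
    (tendsto_rpow_neg_atTop (by norm_num)).comp hn₁
  refine IsBigOpProb.of_abs_le_of_integral_le (hn₁.eventually_gt_atTop 0) ?_
    (fun n => integrable_drmBound hXmeas hlaw hF₀ hF₁ (n₀ n) (n₁ n))
    (fun n => integral_drmBound_le hXmeas hlaw hF₀ hF₁ hF₀_nonneg (n₀ n) (n₁ n))
  filter_upwards [hρ.eventually (eventually_le_nhds hr)] with n hn ω
  rw [abs_of_nonneg (iSup_nonneg fun _ => abs_nonneg _)]
  exact iSup_abs_drmThirdDeriv_le q X _ _ θstar hr (rpow_nonneg (Nat.cast_nonneg _) _) hn ω a b c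

/-- Under the two-sample density ratio model with Conditions (i)–(iii), for
every multi-index of order three, the third-order partial derivatives of the profile log
empirical likelihood are `O_p(n₁)` uniformly over `‖θ - θ*‖ ≤ n₁^{-1/3}`. -/
theorem drm_third_derivative_order
    (d : ℕ) {Ω : Type*} [MeasurableSpace Ω] (P : Measure Ω) [IsProbabilityMeasure P]
    (G : Fin 2 → Measure ℝ) [∀ k, IsProbabilityMeasure (G k)]
    (q : ℝ → Fin (d + 1) → ℝ) (hqmeas : Measurable q)
    (hq0 : ∀ x, q x 0 = 1)
    (θstar : Fin (d + 1) → ℝ)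
    (hDRM : G 1 = (G 0).withDensity fun x => ENNReal.ofReal (Real.exp (∑ i, θstar i * q x i)))
    (X : Fin 2 → ℕ → Ω → ℝ) (hXmeas : ∀ k j, Measurable (X k j))
    (hindep : iIndepFun (fun p : Fin 2 × ℕ => X p.1 p.2) P)
    (hlaw : ∀ k j, Measure.map (X k j) P = G k)
    -- Condition (i)
    (n₀ n₁ : ℕ → ℕ)
    (hn₀ : Tendsto (fun n => (n₀ n : ℝ)) atTop atTop)
    (hn₁ : Tendsto (fun n => (n₁ n : ℝ)) atTop atTop)
    (hratio : Tendsto (fun n => (n₀ n : ℝ) / (n₁ n : ℝ)) atTop atTop)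
    -- Condition (ii)
    (hii : (Matrix.of fun i j => ∫ x, q x i * q x j ∂(G 0)).PosDef)
    -- Condition (iii)
    (hiii : ∃ ε > 0, ∀ θ : Fin (d + 1) → ℝ,
      (Real.sqrt (∑ i, (θ i - θstar i) ^ 2) < ε ∨ Real.sqrt (∑ i, (θ i) ^ 2) < ε) →
      Integrable (fun x => Real.exp (∑ i, θ i * q x i)) (G 0) ∧
      Integrable (fun x => Real.exp (∑ i, θ i * q x i)) (G 1)) :
    ∀ a b c : Fin (d + 1),
      IsBigOpProb P
        (fun n ω =>
          ⨆ θ : {θ : Fin (d + 1) → ℝ //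
              Real.sqrt (∑ i, (θ i - θstar i) ^ 2) ≤ (n₁ n : ℝ) ^ (-(1 / 3 : ℝ))},
            |drmThirdDeriv d q X (n₀ n) (n₁ n) θ.1 ω a b c|)
        (fun n => (n₁ n : ℝ)) :=
  drm_third_derivative_order_general d P G q hqmeas θstar X hXmeas hlaw n₀ n₁ hn₁ hiii

end
end
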